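/- If the bigraded components satisfy φ ∈ C_{ab} and ψ ∈ C_{a'b'}, then φ ⌣ ψ ∈ C_{a+a', b+b'} and [φ, ψ] ⊆ Σ_{a+a' ≤ d ≤ b+b'} C_{a+a', d}; in particular both products land in S_{(a,b)+(a',b')}. -/

import Mathlib

/-!
The cup product of two elementary cochains is the elementary cochain with concatenated
derivative orders, so weights and total degrees simply add.

For the bracket, inserting `ψ` into the `k`-th slot of `x^{a₀} ∂^{a₁} ⊗ ⋯ ⊗ ∂^{a_p}` applies
`∂^{a_k}` to `ψ`. By the Leibniz rule, `∂ᵢ` maps an elementary cochain of weight `w` and total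
degree `s` to elementary cochains of weight `w - eᵢ` and total degree `s - eᵢ` or `s + eᵢ`; so
weights stay exact while total degrees are only bounded above, coordinatewise. Both compositions
`φ ∘ ψ` and `ψ ∘ φ` therefore lie in the span of elementary cochains of weight `a + a'` and total
degree `≤ b + b'` coordinatewise. Since weight `≤` total degree coordinatewise, and coordinatewise
`≤` implies lexicographic `≤`, this span lies in `S_{(a,b)+(a',b')}`.
-/

open Finset

namespace Gerst

/-- A `p`-cochain of the algebra `A`: a map `A^p → A`. -/
abbrev Cochain (A : Type*) (p : ℕ) := (Fin p → A) → A

variable {A : Type*} [CommRing A]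

/-- The cup product of cochains. -/
def cup {p q : ℕ} (φ : Cochain A p) (ψ : Cochain A q) : Cochain A (p + q) :=
  fun u => φ (fun i => u (Fin.castAdd q i)) * ψ (fun i => u (Fin.natAdd p i))

/-- Insert the value of `ψ` at position `k` among the arguments of a `p`-cochain. -/
def insertArg {p q : ℕ} (ψ : Cochain A q) (k : Fin p) (u : Fin (p + q - 1) → A) :
    Fin p → A :=
  fun i =>
    if _h : i.val < k.val then u ⟨i.val, by have := i.isLt; have := k.isLt; omega⟩
    else if _h2 : i.val = k.val then
      ψ (fun j => u ⟨k.val + j.val, by have := j.isLt; have := k.isLt; omega⟩)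
    else u ⟨i.val + q - 1, by have := i.isLt; have := k.isLt; omega⟩

/-- `(-1)^m` for an integer exponent `m`. -/
def sgn (m : ℤ) : ℤ := ((-1 : ℤˣ) ^ m : ℤˣ)

/-- The Gerstenhaber circle (composition) product. -/
def circ {p q : ℕ} (φ : Cochain A p) (ψ : Cochain A q) : Cochain A (p + q - 1) :=
  fun u => ∑ k : Fin p, sgn ((k.val : ℤ) * ((q : ℤ) - 1)) • φ (insertArg ψ k u)

/-- The Gerstenhaber bracket. -/
def bracket {p q : ℕ} (φ : Cochain A p) (ψ : Cochain A q) : Cochain A (p + q - 1) :=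
  fun u => circ φ ψ u -
    sgn (((p : ℤ) - 1) * ((q : ℤ) - 1)) •
      circ ψ φ (fun i => u (Fin.cast (by omega) i))

/-- The multiplication of `A` as a 2-cochain. -/
def mulC : Cochain A 2 := fun u => u 0 * u 1

/-- The Hochschild coboundary operator. -/
def hdelta {p : ℕ} (φ : Cochain A p) : Cochain A (p + 1) :=
  fun u => u 0 * φ (fun i => u i.succ)
    + ∑ k : Fin p, ((-1 : ℤ) ^ (k.val + 1)) •
        φ (fun i =>
          if i.val < k.val then u ⟨i.val, by have := i.isLt; omega⟩
          else if i.val = k.val then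
            u ⟨k.val, by have := k.isLt; omega⟩ * u ⟨k.val + 1, by have := k.isLt; omega⟩
          else u ⟨i.val + 1, by have := i.isLt; omega⟩)
    + ((-1 : ℤ) ^ (p + 1)) • (φ (fun i => u i.castSucc) * u (Fin.last p))

/-- The iterated partial derivative `∂^a` on `ℝ[x₁,…,xₙ]`. -/
noncomputable def Dpow {n : ℕ} (a : Fin n → ℕ) :
    Module.End ℝ (MvPolynomial (Fin n) ℝ) :=
  ((List.finRange n).map
    (fun i => ((MvPolynomial.pderiv i).toLinearMap) ^ (a i))).prod

/-- The elementary cochain `x^{a₀} ∂^{a₁} ⊗ ⋯ ⊗ ∂^{a_p}`. -/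
noncomputable def elem {n p : ℕ} (a₀ : Fin n → ℕ) (as : Fin p → Fin n → ℕ) :
    Cochain (MvPolynomial (Fin n) ℝ) p :=
  fun u => MvPolynomial.monomial (Finsupp.equivFunOnFinite.symm a₀) (1 : ℝ) *
    ∏ s : Fin p, Dpow (as s) (u s)

/-- The weight `a₀ - ∑ₛ aₛ ∈ ℤⁿ` of an elementary cochain. -/
def wt {n p : ℕ} (a₀ : Fin n → ℕ) (as : Fin p → Fin n → ℕ) : Fin n → ℤ :=
  fun i => (a₀ i : ℤ) - ∑ s : Fin p, (as s i : ℤ)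

/-- The total degree `a₀ + ∑ₛ aₛ` of an elementary cochain. -/
def swt {n p : ℕ} (a₀ : Fin n → ℕ) (as : Fin p → Fin n → ℕ) : Fin n → ℤ :=
  fun i => (a₀ i : ℤ) + ∑ s : Fin p, (as s i : ℤ)

/-- The weight space `C_a`. -/
noncomputable def WS (n p : ℕ) (a : Fin n → ℤ) :
    Submodule ℝ (Cochain (MvPolynomial (Fin n) ℝ) p) :=
  Submodule.span ℝ {φ | ∃ a₀ as, wt a₀ as = a ∧ φ = elem a₀ as}

/-- `C_Δ = ⊕_{a ∈ Δ} C_a`. -/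
noncomputable def CD (n p : ℕ) (Δ : Set (Fin n → ℤ)) :
    Submodule ℝ (Cochain (MvPolynomial (Fin n) ℝ) p) :=
  Submodule.span ℝ {φ | ∃ a₀ as, wt a₀ as ∈ Δ ∧ φ = elem a₀ as}

/-- The Euler vector field `hⁱ = xᵢ ∂ᵢ` as a 1-cochain. -/
noncomputable def hV {n : ℕ} (i : Fin n) : Cochain (MvPolynomial (Fin n) ℝ) 1 :=
  fun u => MvPolynomial.X i * MvPolynomial.pderiv i (u 0)


/-- Lexicographic (non-strict) order on `ℤⁿ`. -/
def lexLe {n : ℕ} (a b : Fin n → ℤ) : Prop :=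
  a = b ∨ ∃ i, (∀ j, j < i → a j = b j) ∧ a i < b i

/-- Lexicographic order on pairs. -/
def pairLe {n : ℕ} (α β : (Fin n → ℤ) × (Fin n → ℤ)) : Prop :=
  (lexLe α.1 β.1 ∧ α.1 ≠ β.1) ∨ (α.1 = β.1 ∧ lexLe α.2 β.2)

/-- The bigraded component `C_{ab}`. -/
noncomputable def WS2 (n p : ℕ) (a b : Fin n → ℤ) :
    Submodule ℝ (Cochain (MvPolynomial (Fin n) ℝ) p) :=
  Submodule.span ℝ {φ | ∃ a₀ as, wt a₀ as = a ∧ swt a₀ as = b ∧ φ = elem a₀ as}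

/-- The filtration space `S_{(a,b)} = ⊕_{a ≤ d ≤ b} C_{ad}`. -/
noncomputable def Sfil (n p : ℕ) (α : (Fin n → ℤ) × (Fin n → ℤ)) :
    Submodule ℝ (Cochain (MvPolynomial (Fin n) ℝ) p) :=
  Submodule.span ℝ {φ | ∃ a₀ as, wt a₀ as = α.1 ∧
    lexLe α.1 (swt a₀ as) ∧ lexLe (swt a₀ as) α.2 ∧ φ = elem a₀ as}

open MvPolynomial

theorem lexLe_of_le {n : ℕ} {a b : Fin n → ℤ} (h : a ≤ b) : lexLe a b :=
  h.eq_or_lt.imp id (Pi.lex_lt_of_lt wellFounded_lt)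

theorem _root_.Derivation.leibniz_prod_update {R B : Type*} [CommSemiring R] [CommSemiring B]
    [Algebra R B] (D : Derivation R B B) {ι : Type*} [DecidableEq ι] (s : Finset ι)
    (f : ι → B) :
    D (∏ x ∈ s, f x) = ∑ t ∈ s, ∏ x ∈ s, Function.update f t (D (f t)) x := by
  induction s using Finset.induction_on with
  | empty => simp
  | @insert a s ha ih =>
    have hfresh : ∀ t ∈ s, Function.update f t (D (f t)) a = f a := fun t ht =>
      Function.update_of_ne (by rintro rfl; exact ha ht) _ _
    have hrest : ∏ x ∈ s, Function.update f a (D (f a)) x = ∏ x ∈ s, f x :=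
      prod_congr rfl fun x hx => Function.update_of_ne (by rintro rfl; exact ha hx) _ _
    have hsummand : ∀ t ∈ s, ∏ x ∈ insert a s, Function.update f t (D (f t)) x =
        f a * ∏ x ∈ s, Function.update f t (D (f t)) x := fun t ht => by
      rw [prod_insert ha, hfresh t ht]
    rw [prod_insert ha, D.leibniz, ih, sum_insert ha, prod_insert ha, Function.update_self,
      hrest, sum_congr rfl hsummand, ← mul_sum, smul_eq_mul, smul_eq_mul]
    ring

theorem _root_.List.prod_map_update_mul_of_commute {M ι : Type*} [Monoid M] [DecidableEq ι]
    {f : ι → M} {x : M} (hx : ∀ j, Commute x (f j)) (i : ι) {l : List ι} (hl : l.Nodup)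
    (hi : i ∈ l) : (l.map (Function.update f i (x * f i))).prod = x * (l.map f).prod := by
  induction l with
  | nil => simp at hi
  | cons j l ih =>
    rw [List.nodup_cons] at hl
    rcases eq_or_ne j i with rfl | hji
    · simp only [List.map_cons, List.prod_cons, Function.update_self, mul_assoc]
      have hfree : l.map (Function.update f j (x * f j)) = l.map f :=
        List.map_congr_left fun k hk => Function.update_of_ne (by rintro rfl; exact hl.1 hk) _ _
      rw [hfree]
    · have hil : i ∈ l := (List.mem_cons.mp hi).resolve_left hji.symm
      simp only [List.map_cons, List.prod_cons, Function.update_of_ne hji, ih hl.2 hil,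
        ← mul_assoc, (hx j).eq]

theorem _root_.MvPolynomial.commute_pderiv {σ R : Type*} [CommRing R] (i j : σ) :
    Commute (pderiv i : Derivation R (MvPolynomial σ R) _).toLinearMap (pderiv j).toLinearMap := by
  classical
  have hbracket : ⁅pderiv i, pderiv j⁆ =
      (0 : Derivation R (MvPolynomial σ R) (MvPolynomial σ R)) :=
    derivation_ext fun k => by
      rw [Derivation.commutator_apply, pderiv_X, pderiv_X, Pi.single_apply, Pi.single_apply]
      split_ifs <;> simp
  refine LinearMap.ext fun f => ?_
  simpa [Derivation.commutator_apply, sub_eq_zero] using congrArg (· f) hbracket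

theorem Dpow_add_single {n : ℕ} (b : Fin n → ℕ) (i : Fin n) :
    Dpow (b + Pi.single i 1) = (pderiv i).toLinearMap * Dpow b := by
  have hfactors : (fun j => ((pderiv j).toLinearMap : Module.End ℝ (MvPolynomial (Fin n) ℝ)) ^
      (b + Pi.single i 1 : Fin n → ℕ) j) =
      Function.update (fun j => (pderiv j).toLinearMap ^ b j) i
        ((pderiv i).toLinearMap * (pderiv i).toLinearMap ^ b i) := by
    ext1 j
    rcases eq_or_ne j i with rfl | hji
    · simp [pow_succ']
    · simp [hji]
  rw [Dpow, Dpow, hfactors]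
  exact List.prod_map_update_mul_of_commute (fun j => (commute_pderiv i j).pow_right _) i
    (List.nodup_finRange n) (List.mem_finRange i)

section Elementary

variable {n : ℕ}

theorem monomial_equivFunOnFinite_add (a b : Fin n → ℕ) :
    monomial (Finsupp.equivFunOnFinite.symm (a + b)) (1 : ℝ) =
      monomial (Finsupp.equivFunOnFinite.symm a) 1 *
        monomial (Finsupp.equivFunOnFinite.symm b) 1 := by
  rw [monomial_mul, one_mul]
  congr
  exact Finsupp.ext fun _ => rfl

theorem pderiv_monomial_equivFunOnFinite (b : Fin n → ℕ) (i : Fin n) :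
    pderiv i (monomial (Finsupp.equivFunOnFinite.symm b) (1 : ℝ)) =
      (b i : ℝ) • monomial (Finsupp.equivFunOnFinite.symm (b - Pi.single i 1)) 1 := by
  have hexp : Finsupp.equivFunOnFinite.symm b - Finsupp.single i 1 =
      Finsupp.equivFunOnFinite.symm (b - Pi.single i 1) :=
    Finsupp.ext fun j => by simp [Pi.single_apply, Finsupp.single_apply, eq_comm]
  rw [pderiv_monomial, smul_monomial, hexp]
  simp

theorem cup_elem {p q : ℕ} (a₀ : Fin n → ℕ) (as : Fin p → Fin n → ℕ) (b₀ : Fin n → ℕ)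
    (bs : Fin q → Fin n → ℕ) :
    cup (elem a₀ as) (elem b₀ bs) = elem (a₀ + b₀) (Fin.append as bs) := by
  funext u
  simp only [cup, elem, Fin.prod_univ_add, Fin.append_left, Fin.append_right,
    monomial_equivFunOnFinite_add]
  ring

theorem pderiv_comp_elem {q : ℕ} (i : Fin n) (b₀ : Fin n → ℕ) (bs : Fin q → Fin n → ℕ) :
    ⇑(pderiv i) ∘ elem b₀ bs =
      (b₀ i : ℝ) • elem (b₀ - Pi.single i 1) bs +
        ∑ t, elem b₀ (bs + Pi.single t (Pi.single i 1)) := by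
  funext u
  have hfactor : ∀ t s, Function.update (fun s => Dpow (bs s) (u s)) t
      (pderiv i (Dpow (bs t) (u t))) s =
      Dpow ((bs + Pi.single t (Pi.single i 1) : Fin q → Fin n → ℕ) s) (u s) := by
    intro t s
    rcases eq_or_ne s t with rfl | hst
    · simp [Dpow_add_single]
    · simp [hst]
  simp only [Function.comp_apply, Pi.add_apply, Pi.smul_apply, Finset.sum_apply, elem, pderiv_mul,
    pderiv_monomial_equivFunOnFinite, Derivation.leibniz_prod_update, hfactor, mul_sum,
    smul_mul_assoc]

end Elementary

section Weights

variable {n : ℕ}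

theorem wt_le_swt {p : ℕ} (a₀ : Fin n → ℕ) (as : Fin p → Fin n → ℕ) : wt a₀ as ≤ swt a₀ as :=
  fun i => by
    have : (0 : ℤ) ≤ ∑ s, (as s i : ℤ) := sum_nonneg fun s _ => by positivity
    simp only [wt, swt]
    linarith

theorem wt_append {p q : ℕ} (a₀ : Fin n → ℕ) (as : Fin p → Fin n → ℕ) (b₀ : Fin n → ℕ)
    (bs : Fin q → Fin n → ℕ) : wt (a₀ + b₀) (Fin.append as bs) = wt a₀ as + wt b₀ bs := by
  funext i
  simp only [wt, Pi.add_apply, Fin.sum_univ_add, Fin.append_left, Fin.append_right]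
  push_cast
  ring

theorem swt_append {p q : ℕ} (a₀ : Fin n → ℕ) (as : Fin p → Fin n → ℕ) (b₀ : Fin n → ℕ)
    (bs : Fin q → Fin n → ℕ) : swt (a₀ + b₀) (Fin.append as bs) = swt a₀ as + swt b₀ bs := by
  funext i
  simp only [swt, Pi.add_apply, Fin.sum_univ_add, Fin.append_left, Fin.append_right]
  push_cast
  ring

theorem wt_sub {q : ℕ} {b₀ e : Fin n → ℕ} (he : e ≤ b₀) (bs : Fin q → Fin n → ℕ) :
    wt (b₀ - e) bs = wt b₀ bs - fun i => (e i : ℤ) := by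
  funext i
  simp only [wt, Pi.sub_apply, Nat.cast_sub (he i)]
  ring

theorem swt_sub_le {q : ℕ} (b₀ e : Fin n → ℕ) (bs : Fin q → Fin n → ℕ) :
    swt (b₀ - e) bs ≤ swt b₀ bs := fun i => by
  simp only [swt, Pi.sub_apply]
  have : ((b₀ i - e i : ℕ) : ℤ) ≤ b₀ i := by exact_mod_cast Nat.sub_le _ _
  linarith

theorem wt_add_single {q : ℕ} (b₀ : Fin n → ℕ) (bs : Fin q → Fin n → ℕ) (t : Fin q)
    (e : Fin n → ℕ) : wt b₀ (bs + Pi.single t e) = wt b₀ bs - fun i => (e i : ℤ) := by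
  funext i
  simp only [wt, Pi.add_apply, Pi.sub_apply, Nat.cast_add, sum_add_distrib, Pi.single_apply]
  simp only [apply_ite (fun f : Fin n → ℕ => (f i : ℤ)), Pi.zero_apply, Nat.cast_zero,
    sum_ite_eq', mem_univ, if_true]
  ring

theorem swt_add_single {q : ℕ} (b₀ : Fin n → ℕ) (bs : Fin q → Fin n → ℕ) (t : Fin q)
    (e : Fin n → ℕ) : swt b₀ (bs + Pi.single t e) = swt b₀ bs + fun i => (e i : ℤ) := by
  funext i
  simp only [swt, Pi.add_apply, Nat.cast_add, sum_add_distrib, Pi.single_apply]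
  simp only [apply_ite (fun f : Fin n → ℕ => (f i : ℤ)), Pi.zero_apply, Nat.cast_zero,
    sum_ite_eq', mem_univ, if_true]
  ring

end Weights

section Insertion

variable {M : Type*} {p q : ℕ}

def innerIdx (k : Fin p) (j : Fin q) : Fin (p + q - 1) :=
  ⟨k + j, by omega⟩

def outerIdx (q : ℕ) (k : Fin p) (s : {s : Fin p // s ≠ k}) : Fin (p + q - 1) :=
  if h : s.1.val < k.val then ⟨s.1, by omega⟩
  else ⟨s.1 + q - 1, by have := Fin.val_ne_of_ne s.2; omega⟩

theorem insertArg_self (ψ : Cochain M q) (k : Fin p) (u : Fin (p + q - 1) → M) :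
    insertArg ψ k u k = ψ fun j => u (innerIdx k j) := by
  simp [insertArg, innerIdx]

theorem insertArg_of_ne (ψ : Cochain M q) (k : Fin p) (u : Fin (p + q - 1) → M)
    (s : {s : Fin p // s ≠ k}) : insertArg ψ k u s = u (outerIdx q k s) := by
  have := Fin.val_ne_of_ne s.2
  unfold insertArg outerIdx
  split_ifs <;> rfl

theorem outerIdx_val (k : Fin p) (s : {s : Fin p // s ≠ k}) :
    (outerIdx q k s : ℕ) = if s.1.val < k.val then s.1.val else s.1.val + q - 1 := by
  unfold outerIdx
  split_ifs <;> rfl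

theorem innerIdx_sum_outerIdx_injective (k : Fin p) :
    Function.Injective (Sum.elim (innerIdx (q := q) k) (outerIdx q k)) := by
  rintro (x | x) (y | y) hxy <;> have hval := congrArg Fin.val hxy <;>
    simp only [Sum.elim_inl, Sum.elim_inr, innerIdx, outerIdx_val] at hval
  · exact congrArg Sum.inl (Fin.ext (by omega))
  · have := Fin.val_ne_of_ne y.2
    split_ifs at hval <;> omega
  · have := Fin.val_ne_of_ne x.2
    split_ifs at hval <;> omega
  · have := Fin.val_ne_of_ne x.2
    have := Fin.val_ne_of_ne y.2
    exact congrArg Sum.inr (Subtype.ext (Fin.ext (by split_ifs at hval <;> omega)))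

noncomputable def insertEquiv (k : Fin p) : Fin q ⊕ {s : Fin p // s ≠ k} ≃ Fin (p + q - 1) :=
  Equiv.ofBijective _ <| (Fintype.bijective_iff_injective_and_card _).mpr
    ⟨innerIdx_sum_outerIdx_injective k, by have := k.isLt; simp [Fintype.card_subtype_compl]; omega⟩

end Insertion

section Composition

variable {n p q : ℕ}

@[to_additive]
theorem prod_innerIdx_mul_prod_outerIdx {N : Type*} [CommMonoid N] (k : Fin p)
    (g : Fin (p + q - 1) → N) :
    (∏ j, g (innerIdx k j)) * ∏ s : {s : Fin p // s ≠ k}, g (outerIdx q k s) = ∏ w, g w := by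
  rw [← (insertEquiv k).prod_comp, Fintype.prod_sum_type]
  rfl

noncomputable def mergeIdx (as : Fin p → Fin n → ℕ) (bs : Fin q → Fin n → ℕ) (k : Fin p) :
    Fin (p + q - 1) → Fin n → ℕ :=
  Sum.elim bs (fun s : {s : Fin p // s ≠ k} => as s) ∘ (insertEquiv k).symm

theorem mergeIdx_innerIdx (as : Fin p → Fin n → ℕ) (bs : Fin q → Fin n → ℕ) (k : Fin p)
    (j : Fin q) : mergeIdx as bs k (innerIdx k j) = bs j := by
  simp [mergeIdx, show innerIdx k j = insertEquiv k (.inl j) from rfl]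

theorem mergeIdx_outerIdx (as : Fin p → Fin n → ℕ) (bs : Fin q → Fin n → ℕ) (k : Fin p)
    (s : {s : Fin p // s ≠ k}) : mergeIdx as bs k (outerIdx q k s) = as s := by
  simp [mergeIdx, show outerIdx q k s = insertEquiv k (.inr s) from rfl]

theorem wt_mergeIdx (a₀ : Fin n → ℕ) (as : Fin p → Fin n → ℕ) (b₀ : Fin n → ℕ)
    (bs : Fin q → Fin n → ℕ) (k : Fin p) :
    wt (a₀ + b₀) (mergeIdx as bs k) = wt a₀ as + (fun i => (as k i : ℤ)) + wt b₀ bs := by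
  funext i
  simp only [wt, Pi.add_apply, ← sum_innerIdx_add_sum_outerIdx k, mergeIdx_innerIdx,
    mergeIdx_outerIdx, Fintype.sum_eq_add_sum_subtype_ne (fun s => (as s i : ℤ)) k]
  push_cast
  ring

theorem swt_mergeIdx (a₀ : Fin n → ℕ) (as : Fin p → Fin n → ℕ) (b₀ : Fin n → ℕ)
    (bs : Fin q → Fin n → ℕ) (k : Fin p) :
    swt (a₀ + b₀) (mergeIdx as bs k) = swt a₀ as - (fun i => (as k i : ℤ)) + swt b₀ bs := by
  funext i
  simp only [swt, Pi.add_apply, Pi.sub_apply, ← sum_innerIdx_add_sum_outerIdx k,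
    mergeIdx_innerIdx, mergeIdx_outerIdx,
    Fintype.sum_eq_add_sum_subtype_ne (fun s => (as s i : ℤ)) k]
  push_cast
  ring

noncomputable def elemInsert (a₀ : Fin n → ℕ) (as : Fin p → Fin n → ℕ) (k : Fin p) :
    Cochain (MvPolynomial (Fin n) ℝ) q →ₗ[ℝ] Cochain (MvPolynomial (Fin n) ℝ) (p + q - 1) where
  toFun χ u := monomial (Finsupp.equivFunOnFinite.symm a₀) 1 * χ (fun j => u (innerIdx k j)) *
    ∏ s : {s : Fin p // s ≠ k}, Dpow (as s) (u (outerIdx q k s))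
  map_add' χ χ' := by
    funext u
    simp only [Pi.add_apply, mul_add, add_mul]
  map_smul' c χ := by
    funext u
    simp only [Pi.smul_apply, mul_smul_comm, smul_mul_assoc, RingHom.id_apply]

theorem elem_comp_insertArg (a₀ : Fin n → ℕ) (as : Fin p → Fin n → ℕ) (k : Fin p)
    (ψ : Cochain (MvPolynomial (Fin n) ℝ) q) :
    (fun u => elem a₀ as (insertArg ψ k u)) = elemInsert a₀ as k (⇑(Dpow (as k)) ∘ ψ) := by
  funext u
  simp only [elem, elemInsert, LinearMap.coe_mk, AddHom.coe_mk, Function.comp_apply,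
    Fintype.prod_eq_mul_prod_subtype_ne _ k, insertArg_self, insertArg_of_ne, mul_assoc]

theorem elemInsert_elem (a₀ : Fin n → ℕ) (as : Fin p → Fin n → ℕ) (k : Fin p)
    (b₀ : Fin n → ℕ) (bs : Fin q → Fin n → ℕ) :
    elemInsert a₀ as k (elem b₀ bs) = elem (a₀ + b₀) (mergeIdx as bs k) := by
  funext u
  simp only [elem, elemInsert, LinearMap.coe_mk, AddHom.coe_mk,
    ← prod_innerIdx_mul_prod_outerIdx k, mergeIdx_innerIdx, mergeIdx_outerIdx,
    monomial_equivFunOnFinite_add]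
  ring

theorem circ_elem (a₀ : Fin n → ℕ) (as : Fin p → Fin n → ℕ)
    (ψ : Cochain (MvPolynomial (Fin n) ℝ) q) :
    circ (elem a₀ as) ψ =
      ∑ k : Fin p, sgn ((k : ℤ) * ((q : ℤ) - 1)) • elemInsert a₀ as k (⇑(Dpow (as k)) ∘ ψ) := by
  funext u
  simp only [circ, Finset.sum_apply, Pi.smul_apply, ← elem_comp_insertArg]

end Composition

section Bilinear

variable {R : Type*} [CommSemiring R] [Algebra R A] {p q : ℕ}

def cupBilin : Cochain A p →ₗ[R] Cochain A q →ₗ[R] Cochain A (p + q) :=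
  LinearMap.mk₂ R cup
    (fun _ _ _ => funext fun _ => add_mul _ _ _)
    (fun _ _ _ => funext fun _ => smul_mul_assoc _ _ _)
    (fun _ _ _ => funext fun _ => mul_add _ _ _)
    (fun _ _ _ => funext fun _ => mul_smul_comm _ _ _)

def circLeft (ψ : Cochain A q) : Cochain A p →ₗ[R] Cochain A (p + q - 1) where
  toFun φ := circ φ ψ
  map_add' φ φ' := funext fun u => by simp only [circ, Pi.add_apply, smul_add, sum_add_distrib]
  map_smul' c φ := funext fun u => by
    simp only [circ, Pi.smul_apply, smul_sum, smul_comm c, RingHom.id_apply]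

end Bilinear

/-- Unlike `WS2`, this span is mapped into itself (up to a shift) by each `∂ᵢ`: differentiating
the monomial `x^{b₀}` lowers the total degree, while differentiating an argument raises it. -/
noncomputable def WS2le (n p : ℕ) (a b : Fin n → ℤ) :
    Submodule ℝ (Cochain (MvPolynomial (Fin n) ℝ) p) :=
  Submodule.span ℝ {φ | ∃ a₀ as, wt a₀ as = a ∧ swt a₀ as ≤ b ∧ φ = elem a₀ as}

section Filtration

variable {n : ℕ}

theorem WS2_le_WS2le {p : ℕ} (a b : Fin n → ℤ) : WS2 n p a b ≤ WS2le n p a b :=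
  Submodule.span_mono fun _ ⟨a₀, as, hw, hs, hφ⟩ => ⟨a₀, as, hw, hs.le, hφ⟩

theorem WS2le_le_Sfil {p : ℕ} (a b : Fin n → ℤ) : WS2le n p a b ≤ Sfil n p (a, b) :=
  Submodule.span_mono fun _ ⟨a₀, as, hw, hs, hφ⟩ =>
    ⟨a₀, as, hw, lexLe_of_le (hw ▸ wt_le_swt a₀ as), lexLe_of_le hs, hφ⟩

theorem apply_mem_of_mem_WS2le {p m : ℕ} {a b : Fin n → ℤ}
    (F : Cochain (MvPolynomial (Fin n) ℝ) p →ₗ[ℝ] Cochain (MvPolynomial (Fin n) ℝ) m)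
    {N : Submodule ℝ (Cochain (MvPolynomial (Fin n) ℝ) m)}
    (hF : ∀ a₀ as, wt a₀ as = a → swt a₀ as ≤ b → F (elem a₀ as) ∈ N)
    {χ : Cochain (MvPolynomial (Fin n) ℝ) p} (hχ : χ ∈ WS2le n p a b) : F χ ∈ N :=
  (Submodule.span_le (p := N.comap F)).2 (by rintro _ ⟨a₀, as, hw, hs, rfl⟩; exact hF a₀ as hw hs)
    hχ

theorem WS2le_comp_cast {m m' : ℕ} (h : m = m') {a b : Fin n → ℤ}
    {χ : Cochain (MvPolynomial (Fin n) ℝ) m} (hχ : χ ∈ WS2le n m a b) :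
    (fun u : Fin m' → MvPolynomial (Fin n) ℝ => χ fun i => u (Fin.cast h i)) ∈ WS2le n m' a b := by
  subst h
  exact hχ

def ShiftsWS2le (T : Module.End ℝ (MvPolynomial (Fin n) ℝ)) (d : Fin n → ℕ) : Prop :=
  ∀ ⦃q : ℕ⦄ ⦃a b : Fin n → ℤ⦄ ⦃χ : Cochain (MvPolynomial (Fin n) ℝ) q⦄,
    χ ∈ WS2le n q a b → ⇑T ∘ χ ∈ WS2le n q (a - fun i => (d i : ℤ)) (b + fun i => (d i : ℤ))

theorem shiftsWS2le_one : ShiftsWS2le (1 : Module.End ℝ (MvPolynomial (Fin n) ℝ)) 0 := by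
  intro q a b χ hχ
  convert hχ using 2 <;> funext i <;> simp

theorem ShiftsWS2le.mul {T U : Module.End ℝ (MvPolynomial (Fin n) ℝ)} {d e : Fin n → ℕ}
    (hT : ShiftsWS2le T d) (hU : ShiftsWS2le U e) : ShiftsWS2le (T * U) (d + e) := by
  intro q a b χ hχ
  have hde : (fun i => ((d + e) i : ℤ)) = (fun i => (e i : ℤ)) + fun i => (d i : ℤ) :=
    funext fun i => by simp [add_comm]
  have h := hT (hU hχ)
  rwa [sub_sub, add_assoc, ← hde] at h

theorem ShiftsWS2le.pow {T : Module.End ℝ (MvPolynomial (Fin n) ℝ)} {d : Fin n → ℕ}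
    (hT : ShiftsWS2le T d) (k : ℕ) : ShiftsWS2le (T ^ k) (k • d) := by
  induction k with
  | zero => simpa using shiftsWS2le_one
  | succ k ih =>
    rw [pow_succ, succ_nsmul]
    exact ih.mul hT

theorem ShiftsWS2le.list_prod {ι : Type*} (T : ι → Module.End ℝ (MvPolynomial (Fin n) ℝ))
    (d : ι → Fin n → ℕ) {l : List ι} (h : ∀ x ∈ l, ShiftsWS2le (T x) (d x)) :
    ShiftsWS2le (l.map T).prod (l.map d).sum := by
  induction l with
  | nil => exact shiftsWS2le_one
  | cons x l ih =>
    simpa using (h x List.mem_cons_self).mul (ih fun y hy => h y (List.mem_cons_of_mem x hy))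

theorem shiftsWS2le_pderiv (i : Fin n) : ShiftsWS2le (pderiv i).toLinearMap (Pi.single i 1) := by
  intro q a b χ hχ
  refine apply_mem_of_mem_WS2le ((pderiv i).toLinearMap.compLeft _) (fun b₀ bs hw hs => ?_) hχ
  change ⇑(pderiv i) ∘ elem b₀ bs ∈ _
  rw [pderiv_comp_elem]
  refine add_mem ?_ (sum_mem fun t _ => Submodule.subset_span ⟨b₀, _,
    by rw [wt_add_single, hw], by rw [swt_add_single]; gcongr, rfl⟩)
  by_cases hb : b₀ i = 0
  · simp [hb]
  · have hle : (Pi.single i 1 : Fin n → ℕ) ≤ b₀ := by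
      intro j
      rcases eq_or_ne j i with rfl | hji
      · simpa using Nat.one_le_iff_ne_zero.mpr hb
      · simp [hji]
    refine Submodule.smul_mem _ _ (Submodule.subset_span ⟨_, bs, by rw [wt_sub hle, hw],
      (swt_sub_le _ _ bs).trans (hs.trans (le_add_of_nonneg_right fun j => ?_)), rfl⟩)
    positivity

theorem shiftsWS2le_Dpow (b : Fin n → ℕ) : ShiftsWS2le (Dpow b) b := by
  have h := ShiftsWS2le.list_prod _ (fun i => b i • Pi.single i 1) (l := List.finRange n)
    fun i _ => (shiftsWS2le_pderiv i).pow (b i)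
  rwa [← Fin.sum_univ_def, ← pi_eq_sum_univ'] at h

end Filtration

section Products

variable {n p q : ℕ} {a b a' b' : Fin n → ℤ}

theorem elemInsert_mem (a₀ : Fin n → ℕ) (as : Fin p → Fin n → ℕ) (k : Fin p)
    {χ : Cochain (MvPolynomial (Fin n) ℝ) q} (hχ : χ ∈ WS2le n q a' b') :
    elemInsert a₀ as k χ ∈ WS2le n (p + q - 1) (wt a₀ as + (fun i => (as k i : ℤ)) + a')
      (swt a₀ as - (fun i => (as k i : ℤ)) + b') := by
  refine apply_mem_of_mem_WS2le _ (fun b₀ bs hw hs => ?_) hχ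
  exact Submodule.subset_span
    ⟨_, _, by rw [wt_mergeIdx, hw], by rw [swt_mergeIdx]; gcongr, elemInsert_elem ..⟩

theorem circ_mem {φ : Cochain (MvPolynomial (Fin n) ℝ) p}
    {ψ : Cochain (MvPolynomial (Fin n) ℝ) q} (hφ : φ ∈ WS2 n p a b) (hψ : ψ ∈ WS2 n q a' b') :
    circ φ ψ ∈ WS2le n (p + q - 1) (a + a') (b + b') := by
  refine (Submodule.span_le (p := (WS2le n (p + q - 1) (a + a') (b + b')).comap
    (circLeft (R := ℝ) ψ))).2 ?_ hφ
  rintro _ ⟨a₀, as, rfl, rfl, rfl⟩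
  change circ (elem a₀ as) ψ ∈ WS2le n (p + q - 1) _ _
  rw [circ_elem]
  refine sum_mem fun k _ => zsmul_mem ?_ _
  have h := elemInsert_mem a₀ as k (shiftsWS2le_Dpow (as k) (WS2_le_WS2le a' b' hψ))
  rwa [add_add_sub_cancel, sub_add_add_cancel] at h

theorem cup_mem {φ : Cochain (MvPolynomial (Fin n) ℝ) p}
    {ψ : Cochain (MvPolynomial (Fin n) ℝ) q} (hφ : φ ∈ WS2 n p a b) (hψ : ψ ∈ WS2 n q a' b') :
    cup φ ψ ∈ WS2 n (p + q) (a + a') (b + b') := by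
  have h := Submodule.apply_mem_map₂ (cupBilin (R := ℝ)) hφ hψ
  rw [WS2, WS2, Submodule.map₂_span_span] at h
  refine (Submodule.span_le.2 ?_) h
  rintro _ ⟨_, ⟨a₀, as, rfl, rfl, rfl⟩, _, ⟨b₀, bs, rfl, rfl, rfl⟩, rfl⟩
  exact Submodule.subset_span ⟨_, _, wt_append .., swt_append .., cup_elem ..⟩

end Products

/-- bigraded components multiply: `C_{ab} ⌣ C_{a'b'} ⊆ C_{a+a',b+b'}`
and `[C_{ab}, C_{a'b'}] ⊆ ⊕_{a+a' ≤ d ≤ b+b'} C_{a+a',d} = S_{(a,b)+(a',b')}`. -/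
theorem WS2_graded {n p q : ℕ} (a b a' b' : Fin n → ℤ)
    (φ : Cochain (MvPolynomial (Fin n) ℝ) p) (ψ : Cochain (MvPolynomial (Fin n) ℝ) q)
    (hφ : φ ∈ WS2 n p a b) (hψ : ψ ∈ WS2 n q a' b') :
    cup φ ψ ∈ WS2 n (p + q) (a + a') (b + b') ∧
      bracket φ ψ ∈ Sfil n (p + q - 1) (a + a', b + b') := by
  refine ⟨cup_mem hφ hψ, ?_⟩
  have hψφ := WS2le_comp_cast (by omega : q + p - 1 = p + q - 1) (circ_mem hψ hφ)
  rw [add_comm a', add_comm b'] at hψφ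
  exact sub_mem (WS2le_le_Sfil _ _ (circ_mem hφ hψ)) (zsmul_mem (WS2le_le_Sfil _ _ hψφ) _)

end Gerst
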